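/- For the recurrence b_n = q^{−2n}[n]_q + q^{−2n−1}[n+1]_q, λ_n = q^{1−4n}([n]_q)^2 (classical q-Laguerre L_n^0(x(1−q);q), monic form), the nth moment is μ_n = q^{−binom(n+1,2)}·[n]_q!. -/
import Mathlib

open Finset

namespace SS

variable {n : ℕ}

/-- `descB σ j = true` iff there is a descent between positions `j` and `j+1`
in the word `σ(1)σ(2)⋯σ(n)`. -/
def descB (σ : Equiv.Perm (Fin n)) (j : ℕ) : Bool :=
  if h : j + 1 < n then decide ((σ ⟨j+1, h⟩) < σ ⟨j, Nat.lt_of_succ_lt h⟩) else false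

/-- The index of the maximal increasing run containing position `p`. -/
def runIdx (σ : Equiv.Perm (Fin n)) (p : ℕ) : ℕ :=
  ((Finset.range p).filter (fun j => descB σ j = true)).card

/-- The index of the run containing the value `v`. -/
def runOf (σ : Equiv.Perm (Fin n)) (v : Fin n) : ℕ := runIdx σ (σ.symm v).val

/-- The number of maximal increasing runs of `σ`. -/
def runCount (σ : Equiv.Perm (Fin n)) : ℕ :=
  if n = 0 then 0 else runIdx σ n + 1

/-- `lsgAt σ v` : number of runs strictly to the left of (the run of) `v`
containing both an element smaller than `v` and an element greater than `v`. -/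
def lsgAt (σ : Equiv.Perm (Fin n)) (v : Fin n) : ℕ :=
  ((Finset.range (runCount σ)).filter (fun r => r < runOf σ v ∧
      (∃ a : Fin n, runOf σ a = r ∧ a < v) ∧ (∃ b : Fin n, runOf σ b = r ∧ v < b))).card

/-- `rsgAt σ v` : number of runs strictly to the right of `v`
containing both an element smaller than `v` and an element greater than `v`. -/
def rsgAt (σ : Equiv.Perm (Fin n)) (v : Fin n) : ℕ :=
  ((Finset.range (runCount σ)).filter (fun r => runOf σ v < r ∧
      (∃ a : Fin n, runOf σ a = r ∧ a < v) ∧ (∃ b : Fin n, runOf σ b = r ∧ v < b))).card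

def lsg (σ : Equiv.Perm (Fin n)) : ℕ := ∑ v : Fin n, lsgAt σ v
def rsg (σ : Equiv.Perm (Fin n)) : ℕ := ∑ v : Fin n, rsgAt σ v

/-- position `p` begins a maximal increasing run. -/
def startsB (σ : Equiv.Perm (Fin n)) (p : ℕ) : Bool := p == 0 || descB σ (p - 1)

/-- position `p` ends a maximal increasing run. -/
def endsB (σ : Equiv.Perm (Fin n)) (p : ℕ) : Bool := p + 1 == n || descB σ p

def openerB (σ : Equiv.Perm (Fin n)) (v : Fin n) : Bool :=
  startsB σ (σ.symm v).val && !endsB σ (σ.symm v).val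
def closerB (σ : Equiv.Perm (Fin n)) (v : Fin n) : Bool :=
  endsB σ (σ.symm v).val && !startsB σ (σ.symm v).val
def singB (σ : Equiv.Perm (Fin n)) (v : Fin n) : Bool :=
  startsB σ (σ.symm v).val && endsB σ (σ.symm v).val
def contB (σ : Equiv.Perm (Fin n)) (v : Fin n) : Bool :=
  !startsB σ (σ.symm v).val && !endsB σ (σ.symm v).val

def lsgOp (σ : Equiv.Perm (Fin n)) : ℕ :=
  ∑ v ∈ univ.filter (fun v : Fin n => openerB σ v = true), lsgAt σ v
def rsgOp (σ : Equiv.Perm (Fin n)) : ℕ :=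
  ∑ v ∈ univ.filter (fun v : Fin n => openerB σ v = true), rsgAt σ v
def lsgClos (σ : Equiv.Perm (Fin n)) : ℕ :=
  ∑ v ∈ univ.filter (fun v : Fin n => closerB σ v = true), lsgAt σ v
def rsgClos (σ : Equiv.Perm (Fin n)) : ℕ :=
  ∑ v ∈ univ.filter (fun v : Fin n => closerB σ v = true), rsgAt σ v
def lsgSing (σ : Equiv.Perm (Fin n)) : ℕ :=
  ∑ v ∈ univ.filter (fun v : Fin n => singB σ v = true), lsgAt σ v
def rsgSing (σ : Equiv.Perm (Fin n)) : ℕ :=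
  ∑ v ∈ univ.filter (fun v : Fin n => singB σ v = true), rsgAt σ v
def lsgCont (σ : Equiv.Perm (Fin n)) : ℕ :=
  ∑ v ∈ univ.filter (fun v : Fin n => contB σ v = true), lsgAt σ v
def rsgCont (σ : Equiv.Perm (Fin n)) : ℕ :=
  ∑ v ∈ univ.filter (fun v : Fin n => contB σ v = true), rsgAt σ v

/-- `[m]_q = 1 + q + ⋯ + q^{m-1}`. -/
def qint {R : Type*} [CommRing R] (q : R) (m : ℕ) : R := ∑ i ∈ Finset.range m, q ^ i

/-- `[n]_q! = [1]_q [2]_q ⋯ [n]_q`. -/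
def qfact {R : Type*} [CommRing R] (q : R) (n : ℕ) : R := ∏ m ∈ Finset.range n, qint q (m+1)

/-- `moment b lam l h` : sum of the weights of all weighted Motzkin paths with `l` steps
starting at height `h` and ending at height `0`, where up steps have weight `1`,
a level step at height `k` has weight `b k`, and a down step from height `k`
has weight `lam k`.  The `n`th moment of the corresponding monic orthogonal
polynomial sequence is `moment b lam n 0`. -/
def moment {R : Type*} [CommRing R] (b lam : ℕ → R) : ℕ → ℕ → R
  | 0, h => if h = 0 then 1 else 0
  | (l+1), h => moment b lam l (h+1) + b h * moment b lam l h +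
      (if h = 0 then 0 else lam h * moment b lam l (h-1))

end SS

namespace SS

def qP (q : ℚ) (l h : ℕ) : ℚ := ∏ i ∈ Finset.range h, qint q (l - i)

lemma qint_zero (q : ℚ) : qint q 0 = 0 := by simp [qint]
lemma qint_one (q : ℚ) : qint q 1 = 1 := by simp [qint]

lemma qint_add (q : ℚ) (a b : ℕ) : qint q (a + b) = qint q a + q ^ a * qint q b := by
  simp only [qint]
  rw [Finset.sum_range_add, Finset.mul_sum]
  simp [pow_add]

lemma qP_zero (q : ℚ) (l : ℕ) : qP q l 0 = 1 := by simp [qP]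

lemma qP_succ (q : ℚ) (l h : ℕ) : qP q l (h+1) = qP q l h * qint q (l - h) :=
  Finset.prod_range_succ _ _

lemma qP_shift (q : ℚ) (l h : ℕ) : qP q (l+1) (h+1) = qint q (l+1) * qP q l h := by
  rw [qP, Finset.prod_range_succ']
  simp only [Nat.succ_sub_succ, Nat.sub_zero]
  rw [mul_comm]; rfl

lemma qP_eq_zero (q : ℚ) {l h : ℕ} (hlt : l < h) : qP q l h = 0 :=
  Finset.prod_eq_zero (Finset.mem_range.mpr hlt) (by simp [Nat.sub_self, qint_zero])

lemma scalarId (q : ℚ) (a e : ℕ) :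
    (qint q (a+e+2))^2 = qint q (a+1) * qint q a + q^(a+1) * qint q (e+1) * qint q (a+1)
      + q^a * qint q (e+2) * qint q (a+1) + q^(2*a+2) * (qint q (e+1))^2 := by
  have h1 : qint q (a+e+2) = qint q (a+1) + q^(a+1) * qint q (e+1) := by
    rw [show a+e+2 = (a+1)+(e+1) by ring, qint_add]
  have h2 : qint q (a+e+2) = qint q a + q^a * qint q (e+2) := by
    rw [show a+e+2 = a+(e+2) by ring, qint_add]
  have h3 : qint q (a+1) + q^(a+1) * qint q (e+1) = qint q a + q^a * qint q (e+2) := by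
    rw [← h1, h2]
  rw [h1]
  linear_combination (qint q (a+1)) * h3

lemma stepId (q : ℚ) (l h : ℕ) :
    qint q (l+1) * qP q (l+1) h
      = qP q l (h+1)
        + (q ^ ((l:ℤ) - (h:ℤ) + 1) * qint q h + q ^ ((l:ℤ) - (h:ℤ)) * qint q (h+1)) * qP q l h
        + (if h = 0 then 0
           else q ^ (2*((l:ℤ) - (h:ℤ) + 1)) * (qint q h)^2 * qP q l (h-1)) := by
  cases h with
  | zero =>
      simp only [if_pos rfl, qP_zero, qP_succ, qint_zero, qint_one, Nat.cast_zero, sub_zero,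
        Nat.sub_zero, mul_zero, zero_mul, add_zero, mul_one, zero_add]
      have := qint_add q l 1
      rw [qint_one, mul_one] at this
      rw [this, zpow_natCast]
      simp
  | succ e =>
      rw [if_neg (Nat.succ_ne_zero e), Nat.succ_sub_one]
      rcases lt_trichotomy l e with hle | rfl | hgt
      · rw [qP_eq_zero q (by omega : l < e+1+1), qP_eq_zero q (by omega : l < e+1),
          qP_eq_zero q (by omega : l < e), qP_eq_zero q (by omega : (l+1) < e+1)]
        ring
      · rw [qP_eq_zero q (by omega : l < l+1+1), qP_eq_zero q (by omega : l < l+1), qP_shift]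
        have h0 : (2*((l:ℤ) - ((l+1:ℕ):ℤ) + 1)) = 0 := by push_cast; ring
        rw [h0, zpow_zero]
        ring
      · obtain ⟨a, rfl⟩ : ∃ a, l = a + e + 1 := ⟨l - e - 1, by omega⟩
        have hz1 : q ^ (((a+e+1:ℕ):ℤ) - ((e+1:ℕ):ℤ) + 1) = q ^ (a+1) := by
          rw [← zpow_natCast q (a+1)]; congr 1; push_cast; ring
        have hz2 : q ^ (((a+e+1:ℕ):ℤ) - ((e+1:ℕ):ℤ)) = q ^ a := by
          rw [← zpow_natCast q a]; congr 1; push_cast; ring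
        have hz3 : q ^ (2*(((a+e+1:ℕ):ℤ) - ((e+1:ℕ):ℤ) + 1)) = q ^ (2*a+2) := by
          rw [← zpow_natCast q (2*a+2)]; congr 1; push_cast; ring
        rw [hz1, hz2, hz3, qP_shift, qP_succ, qP_succ,
          show a+e+1-(e+1) = a by omega, show a+e+1-e = a+1 by omega]
        have := scalarId q a e
        linear_combination (qP q (a+e+1) e) * this

lemma choose_step (m : ℕ) : (m+1).choose 2 = m.choose 2 + m := by
  rw [Nat.choose_succ_succ, Nat.choose_one_right, add_comm]

lemma mainLem (q : ℚ) (hq : q ≠ 0) (l : ℕ) : ∀ h : ℕ,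
    moment (fun m => q ^ (-(2 * (m : ℤ))) * qint q m + q ^ (-(2 * (m : ℤ)) - 1) * qint q (m + 1))
           (fun m => q ^ (1 - 4 * (m : ℤ)) * (qint q m) ^ 2) l h
      = q ^ (-(((l+h+1).choose 2 : ℕ) : ℤ)) * (qfact q l * qP q l h) := by
  induction l with
  | zero =>
      intro h
      cases h with
      | zero => simp [moment, qP_zero, qfact]
      | succ e => simp [moment, qP_eq_zero q (Nat.succ_pos e)]
  | succ l ih =>
      intro h
      have hfact : qfact q (l+1) = qfact q l * qint q (l+1) := Finset.prod_range_succ _ _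
      cases h with
      | zero =>
          simp only [moment, reduceIte, ih, hfact, qP_zero, qint_zero, qint_one, Nat.cast_zero,
            mul_zero, zero_add, mul_one, neg_zero, zero_sub, Nat.add_zero,
            show l+1+0+1 = l+1+1 from by omega, show l+(0+1)+1 = l+1+1 from by omega,
            show l+0+1 = l+1 from by omega]
          have hq1 : qint q (l+1) = qint q l + q ^ l := by
            have := qint_add q l 1; rw [qint_one, mul_one] at this; exact this
          have hqP : qP q l 1 = qint q l := by rw [qP_succ, qP_zero, one_mul, Nat.sub_zero]
          have hB : q ^ (-((((l+1+1).choose 2:ℕ)):ℤ)) * q ^ (l:ℕ)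
              = q ^ (-1 : ℤ) * q ^ (-(((l+1).choose 2:ℕ):ℤ)) := by
            rw [← zpow_natCast q l, ← zpow_add₀ hq, ← zpow_add₀ hq]
            congr 1
            have := choose_step (l+1)
            omega
          rw [hqP, hq1]
          linear_combination -(qfact q l) * hB
      | succ e =>
          simp only [moment, if_neg (Nat.succ_ne_zero e), Nat.succ_sub_one, ih, hfact,
            show l+1+(e+1)+1 = l+e+2+1 from by omega, show l+(e+1+1)+1 = l+e+2+1 from by omega,
            show l+(e+1)+1 = l+e+1+1 from by omega]
          have hst := stepId q l (e+1)
          rw [if_neg (Nat.succ_ne_zero e), Nat.succ_sub_one] at hst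
          have hc1 : (l+e+2+1).choose 2 = (l+e+1+1).choose 2 + (l+e+2) := choose_step (l+e+2)
          have hc0 := choose_step (l+e+1)
          have hA : q ^ (-(((l+e+2+1).choose 2 : ℕ) : ℤ)) * q ^ ((l:ℤ) - ((e+1:ℕ):ℤ) + 1)
              = q ^ (-(((l+e+1+1).choose 2 : ℕ) : ℤ)) * q ^ (-(2 * ((e+1:ℕ):ℤ))) := by
            rw [← zpow_add₀ hq, ← zpow_add₀ hq]; congr 1; omega
          have hB : q ^ (-(((l+e+2+1).choose 2 : ℕ) : ℤ)) * q ^ ((l:ℤ) - ((e+1:ℕ):ℤ))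
              = q ^ (-(((l+e+1+1).choose 2 : ℕ) : ℤ)) * q ^ (-(2 * ((e+1:ℕ):ℤ)) - 1) := by
            rw [← zpow_add₀ hq, ← zpow_add₀ hq]; congr 1; omega
          have hC : q ^ (-(((l+e+2+1).choose 2 : ℕ) : ℤ)) * q ^ (2*((l:ℤ) - ((e+1:ℕ):ℤ) + 1))
              = q ^ (-(((l+e+1).choose 2 : ℕ) : ℤ)) * q ^ (1 - 4 * ((e+1:ℕ):ℤ)) := by
            rw [← zpow_add₀ hq, ← zpow_add₀ hq]; congr 1; omega
          linear_combination
            - (q ^ (-(((l+e+2+1).choose 2 : ℕ) : ℤ)) * qfact q l) * hst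
            - (qfact q l * qP q l (e+1) * qint q (e+1)) * hA
            - (qfact q l * qP q l (e+1) * qint q (e+1+1)) * hB
            - (qfact q l * qP q l e * (qint q (e+1))^2) * hC

end SS
open SS in
/-- Moments for the monic `q`-Laguerre recurrence `b_n = q^{-2n}[n]_q + q^{-2n-1}[n+1]_q`,
`λ_n = q^{1-4n}[n]_q²` are `μ_n = q^{-C(n+1,2)} [n]_q!`. -/
theorem stmt18 (q : ℚ) (hq : q ≠ 0) (n : ℕ) :
    moment (fun m => q ^ (-(2 * (m : ℤ))) * qint q m + q ^ (-(2 * (m : ℤ)) - 1) * qint q (m + 1))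
           (fun m => q ^ (1 - 4 * (m : ℤ)) * (qint q m) ^ 2) n 0
      = q ^ (-(((n + 1).choose 2 : ℕ) : ℤ)) * qfact q n := by
  rw [mainLem q hq n 0, qP_zero, mul_one, Nat.add_zero]
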